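/- arXiv:math-ph/0201062 — 5 statements merged into one kernel-verified Lean document; each statement's English description precedes it below -/
import Mathlib

section
/- Each Gaudin Hamiltonian H_i commutes with the total raising operator E = Σ_k E^{(k)} and with the total lowering operator F = Σ_k F^{(k)}. -/
/-!
The Gaudin Hamiltonian `H_i` is a weighted sum of the split Casimir elements
`Ω_ij = ½ h_i h_j + e_i f_j + f_i e_j`, `j ≠ i`. By `sl₂`-invariance of the Casimir tensor,
`Ω_ij` commutes with the diagonal generators `e_i + e_j` and `f_i + f_j`, and it commutes with
the generators of every third site `k ∉ {i, j}`, since these commute with all of its factors.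
Splitting `Σ_k e_k = (e_i + e_j) + Σ_{k ≠ i, j} e_k` then shows that each `Ω_ij`, hence `H_i`,
commutes with `Σ_k e_k`, and likewise with `Σ_k f_k`.
-/

open Finset

theorem Commute.sum_right_of_add {ι R : Type*} [Fintype ι] [DecidableEq ι]
    [NonUnitalNonAssocSemiring R] {x : R} {a : ι → R} {i j : ι} (hij : i ≠ j)
    (hpair : Commute x (a i + a j)) (hrest : ∀ k, k ≠ i → k ≠ j → Commute x (a k)) :
    Commute x (∑ k, a k) := by
  rw [← add_sum_erase _ _ (mem_univ i),
    ← add_sum_erase _ _ (mem_erase.2 ⟨hij.symm, mem_univ j⟩), ← add_assoc]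
  exact hpair.add_right <| Commute.sum_right _ _ _ fun k hk =>
    hrest k (mem_erase.1 (mem_erase.1 hk).2).1 (mem_erase.1 hk).1

section SplitCasimir

variable {R : Type*} [Ring R]

/-- Twice the split Casimir element `½ h ⊗ h' + e ⊗ f' + f ⊗ e'` of `sl₂`, for two copies
`(h, e, f)` and `(h', e', f')` of the standard generators inside one ring. -/
def splitCasimir (h e f h' e' f' : R) : R :=
  h * h' + 2 * (e * f' + f * e')

theorem splitCasimir_commute_add_e {h e f h' e' f' : R}
    (hhe : h * e - e * h = 2 * e) (hhe' : h' * e' - e' * h' = 2 * e')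
    (hef : e * f - f * e = h) (hef' : e' * f' - f' * e' = h')
    (hhe'_comm : Commute h e') (hh'e_comm : Commute h' e) (hee' : Commute e e')
    (hef'_comm : Commute e f') (hfe' : Commute f e') :
    Commute (splitCasimir h e f h' e' f') (e + e') := by
  rw [splitCasimir, commute_iff_eq]
  linear_combination (norm := noncomm_ring)
    h * hh'e_comm.eq + hhe * h' + h * hhe' + hhe'_comm.eq * h'
      - 2 * (e * hef'_comm.eq) - 2 * (e * hef') + 2 * (hee'.eq * f')
      - 2 * (f * hee'.eq) - 2 * (hef * e') + 2 * (hfe'.eq * e')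

/-- The Chevalley involution `(h, e, f) ↦ (-h, f, e)` preserves the `sl₂` relations and fixes
the split Casimir element, so the statement for `f` follows from the one for `e`. -/
theorem splitCasimir_commute_add_f {h e f h' e' f' : R}
    (hhf : h * f - f * h = -2 * f) (hhf' : h' * f' - f' * h' = -2 * f')
    (hef : e * f - f * e = h) (hef' : e' * f' - f' * e' = h')
    (hhf'_comm : Commute h f') (hh'f_comm : Commute h' f) (hff' : Commute f f')
    (hfe' : Commute f e') (hef'_comm : Commute e f') :
    Commute (splitCasimir h e f h' e' f') (f + f') := by
  have key := splitCasimir_commute_add_e (h := -h) (e := f) (f := e) (h' := -h') (e' := f')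
    (f' := e')
    (by linear_combination (norm := noncomm_ring) -hhf)
    (by linear_combination (norm := noncomm_ring) -hhf')
    (by linear_combination (norm := noncomm_ring) -hef)
    (by linear_combination (norm := noncomm_ring) -hef')
    hhf'_comm.neg_left hh'f_comm.neg_left hff' hfe' hef'_comm
  rwa [splitCasimir, neg_mul_neg, add_comm (f * e'), ← splitCasimir] at key

theorem Commute.splitCasimir_left {h e f h' e' f' x : R}
    (hh : Commute h x) (he : Commute e x) (hf : Commute f x)
    (hh' : Commute h' x) (he' : Commute e' x) (hf' : Commute f' x) :
    Commute (splitCasimir h e f h' e' f') x :=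
  (hh.mul_left hh').add_left
    ((Commute.ofNat_left 2 x).mul_left ((he.mul_left hf').add_left (hf.mul_left he')))

theorem inv_two_smul_splitCasimir {K : Type*} [Field K] [NeZero (2 : K)] [Algebra K R]
    (h e f h' e' f' : R) :
    (2 : K)⁻¹ • splitCasimir h e f h' e' f' = (2 : K)⁻¹ • (h * h') + e * f' + f * e' := by
  rw [splitCasimir, smul_add, add_assoc, ← map_ofNat (algebraMap K R), ← Algebra.smul_def,
    inv_smul_smul₀ two_ne_zero]

end SplitCasimir

section Sites

variable {ι R : Type*} [Ring R] {H E F : ι → R}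

theorem splitCasimir_commute_diagonal
    (hHE : ∀ k, H k * E k - E k * H k = 2 * E k) (hHF : ∀ k, H k * F k - F k * H k = -2 * F k)
    (hEF : ∀ k, E k * F k - F k * E k = H k)
    (hcross : ∀ k l, k ≠ l →
      Commute (H k) (H l) ∧ Commute (H k) (E l) ∧ Commute (H k) (F l) ∧
      Commute (E k) (E l) ∧ Commute (E k) (F l) ∧ Commute (F k) (F l))
    {i j : ι} (hij : i ≠ j) :
    Commute (splitCasimir (H i) (E i) (F i) (H j) (E j) (F j)) (E i + E j) ∧
      Commute (splitCasimir (H i) (E i) (F i) (H j) (E j) (F j)) (F i + F j) := by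
  obtain ⟨-, hHiEj, hHiFj, hEiEj, hEiFj, hFiFj⟩ := hcross i j hij
  obtain ⟨-, hHjEi, hHjFi, -, hEjFi, -⟩ := hcross j i hij.symm
  exact ⟨splitCasimir_commute_add_e (hHE i) (hHE j) (hEF i) (hEF j) hHiEj hHjEi hEiEj hEiFj
      hEjFi.symm,
    splitCasimir_commute_add_f (hHF i) (hHF j) (hEF i) (hEF j) hHiFj hHjFi hFiFj hEjFi.symm
      hEiFj⟩

theorem splitCasimir_commute_third_site
    (hcross : ∀ k l, k ≠ l →
      Commute (H k) (H l) ∧ Commute (H k) (E l) ∧ Commute (H k) (F l) ∧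
      Commute (E k) (E l) ∧ Commute (E k) (F l) ∧ Commute (F k) (F l))
    {i j k : ι} (hki : k ≠ i) (hkj : k ≠ j) :
    Commute (splitCasimir (H i) (E i) (F i) (H j) (E j) (F j)) (E k) ∧
      Commute (splitCasimir (H i) (E i) (F i) (H j) (E j) (F j)) (F k) := by
  obtain ⟨-, hHiEk, hHiFk, hEiEk, hEiFk, hFiFk⟩ := hcross i k hki.symm
  obtain ⟨-, hHjEk, hHjFk, hEjEk, hEjFk, hFjFk⟩ := hcross j k hkj.symm
  obtain ⟨-, -, -, -, hEkFi, -⟩ := hcross k i hki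
  obtain ⟨-, -, -, -, hEkFj, -⟩ := hcross k j hkj
  exact ⟨Commute.splitCasimir_left hHiEk hEiEk hEkFi.symm hHjEk hEjEk hEkFj.symm,
    Commute.splitCasimir_left hHiFk hEiFk hFiFk hHjFk hEjFk hFjFk⟩

end Sites

theorem gaudin_commutes_with_total_EF_general {N : ℕ} (A : Type*) [Ring A] [Algebra ℂ A]
    (z : Fin N → ℂ)
    (H E F : Fin N → A)
    (hHEk : ∀ k, H k * E k - E k * H k = (2 : ℂ) • E k)
    (hHFk : ∀ k, H k * F k - F k * H k = (-2 : ℂ) • F k)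
    (hEFk : ∀ k, E k * F k - F k * E k = H k)
    (hcross : ∀ k l, k ≠ l →
      Commute (H k) (H l) ∧ Commute (H k) (E l) ∧ Commute (H k) (F l) ∧
      Commute (E k) (E l) ∧ Commute (E k) (F l) ∧ Commute (F k) (F l)) :
    ∀ i, Commute
        (∑ j ∈ Finset.univ.erase i, (z i - z j)⁻¹ •
          ((2 : ℂ)⁻¹ • (H i * H j) + E i * F j + F i * E j))
        (∑ k, E k) ∧
      Commute
        (∑ j ∈ Finset.univ.erase i, (z i - z j)⁻¹ •
          ((2 : ℂ)⁻¹ • (H i * H j) + E i * F j + F i * E j))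
        (∑ k, F k) := by
  intro i
  have hHE : ∀ k, H k * E k - E k * H k = 2 * E k := by
    simpa only [Algebra.smul_def, map_ofNat] using hHEk
  have hHF : ∀ k, H k * F k - F k * H k = -2 * F k := by
    simpa only [Algebra.smul_def, map_neg, map_ofNat] using hHFk
  have hterm : ∀ j ∈ univ.erase i, Commute (splitCasimir (H i) (E i) (F i) (H j) (E j) (F j))
      (∑ k, E k) ∧ Commute (splitCasimir (H i) (E i) (F i) (H j) (E j) (F j)) (∑ k, F k) := by
    intro j hj
    have hij : i ≠ j := (mem_erase.1 hj).1.symm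
    obtain ⟨hE, hF⟩ := splitCasimir_commute_diagonal hHE hHF hEFk hcross hij
    exact ⟨hE.sum_right_of_add hij fun k hki hkj =>
        (splitCasimir_commute_third_site hcross hki hkj).1,
      hF.sum_right_of_add hij fun k hki hkj => (splitCasimir_commute_third_site hcross hki hkj).2⟩
  simp only [← inv_two_smul_splitCasimir (K := ℂ)]
  exact ⟨Commute.sum_left _ _ _ fun j hj => ((hterm j hj).1.smul_left _).smul_left _,
    Commute.sum_left _ _ _ fun j hj => ((hterm j hj).2.smul_left _).smul_left _⟩

/-- Each Gaudin Hamiltonian `H_i` commutes with the total raising operator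
`Σ_k E^(k)` and with the total lowering operator `Σ_k F^(k)`. -/
theorem gaudin_commutes_with_total_EF {N : ℕ} (A : Type*) [Ring A] [Algebra ℂ A]
    (z : Fin N → ℂ) (hz : Function.Injective z)
    (H E F : Fin N → A)
    (hHEk : ∀ k, H k * E k - E k * H k = (2 : ℂ) • E k)
    (hHFk : ∀ k, H k * F k - F k * H k = (-2 : ℂ) • F k)
    (hEFk : ∀ k, E k * F k - F k * E k = H k)
    (hcross : ∀ k l, k ≠ l →
      Commute (H k) (H l) ∧ Commute (H k) (E l) ∧ Commute (H k) (F l) ∧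
      Commute (E k) (E l) ∧ Commute (E k) (F l) ∧ Commute (F k) (F l)) :
    ∀ i, Commute
        (∑ j ∈ Finset.univ.erase i, (z i - z j)⁻¹ •
          ((2 : ℂ)⁻¹ • (H i * H j) + E i * F j + F i * E j))
        (∑ k, E k) ∧
      Commute
        (∑ j ∈ Finset.univ.erase i, (z i - z j)⁻¹ •
          ((2 : ℂ)⁻¹ • (H i * H j) + E i * F j + F i * E j))
        (∑ k, F k) :=
  gaudin_commutes_with_total_EF_general A z H E F hHEk hHFk hEFk hcross
end

section
/- The commutator of a Gaudin Hamiltonian with the Bethe operator satisfies [H_i, F(w)] = F(w)·H^{(i)}/(w-z_i) - (F^{(i)}/(w-z_i))·Σ_{k=1}^N H^{(k)}/(w-z_k), where F(w) = Σ_{k=1}^N F^{(k)}/(w-z_k). -/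
/-!
The Gaudin Hamiltonian is `∑_{j ≠ i} (z i - z j)⁻¹ Ω i j` with the split Casimir
`Ω i j = ½ H i H j + E i F j + F i E j`. By the `sl₂` relations at one site and locality,
`⁅Ω i j, F k⁆` vanishes for `k ∉ {i, j}`, while `⁅Ω i j, F i⁆ = -⁅Ω i j, F j⁆ = H i F j - F i H j`.
Hence the commutator with `F(w)` is
`∑_{j ≠ i} (z i - z j)⁻¹ ((w - z i)⁻¹ - (w - z j)⁻¹) (H i F j - F i H j)`, and the
partial-fraction identity turns each coefficient into `(w - z i)⁻¹ (w - z j)⁻¹`. Expanding the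
right-hand side gives the same sum: its `k = i` term cancels and `H i` commutes with `F j` for `j ≠ i`.
-/

open Finset

attribute [local instance] LieRing.ofAssociativeRing

theorem Ring.mul_lie {A : Type*} [Ring A] (x y z : A) : ⁅x * y, z⁆ = x * ⁅y, z⁆ + ⁅x, z⁆ * y := by
  simp only [Ring.lie_def, mul_sub, sub_mul, mul_assoc]
  abel

theorem inv_sub_mul_inv_sub_sub_inv_sub {K : Type*} [Field K] {a b w : K} (hab : a ≠ b)
    (ha : w ≠ a) (hb : w ≠ b) :
    (a - b)⁻¹ * ((w - a)⁻¹ - (w - b)⁻¹) = (w - a)⁻¹ * (w - b)⁻¹ := by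
  rw [inv_sub_inv (sub_ne_zero.2 ha) (sub_ne_zero.2 hb), sub_sub_sub_cancel_left, div_eq_mul_inv,
    ← mul_assoc, inv_mul_cancel₀ (sub_ne_zero.2 hab), one_mul, mul_inv]

section SplitCasimir

variable {K A : Type*} [Field K] [NeZero (2 : K)] [Ring A] [Algebra K A] {h e f h' e' f' : A}

theorem lie_splitCasimir_left (hhf : ⁅h, f⁆ = (-2 : K) • f) (hef : ⁅e, f⁆ = h)
    (hh' : Commute h' f) (he' : Commute e' f) (hf' : Commute f' f) :
    ⁅(2 : K)⁻¹ • (h * h') + e * f' + f * e', f⁆ = h * f' - f * h' := by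
  rw [add_lie, add_lie, smul_lie, Ring.mul_lie, Ring.mul_lie, Ring.mul_lie, hhf, hef, hh'.lie_eq,
    he'.lie_eq, hf'.lie_eq, lie_self]
  simp only [mul_zero, zero_mul, zero_add, add_zero, smul_mul_assoc, smul_smul]
  match_scalars <;> field_simp

theorem lie_splitCasimir_right (hhf : ⁅h', f'⁆ = (-2 : K) • f') (hef : ⁅e', f'⁆ = h')
    (hh : Commute h f') (he : Commute e f') (hf : Commute f f') :
    ⁅(2 : K)⁻¹ • (h * h') + e * f' + f * e', f'⁆ = f * h' - h * f' := by
  rw [add_lie, add_lie, smul_lie, Ring.mul_lie, Ring.mul_lie, Ring.mul_lie, hhf, hef, hh.lie_eq,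
    he.lie_eq, hf.lie_eq, lie_self]
  simp only [mul_zero, zero_mul, add_zero, mul_smul_comm, smul_smul]
  match_scalars <;> field_simp

end SplitCasimir

section Gaudin

variable {ι K A : Type*} [Fintype ι] [DecidableEq ι] [Field K] [Ring A] [Algebra K A]
  {H E F : ι → A}

theorem lie_splitCasimir_sum_smul [NeZero (2 : K)] (hHF : ∀ k, ⁅H k, F k⁆ = (-2 : K) • F k)
    (hEF : ∀ k, ⁅E k, F k⁆ = H k) (cHF : Pairwise fun k l => Commute (H k) (F l))
    (cEF : Pairwise fun k l => Commute (E k) (F l)) (cFF : Pairwise fun k l => Commute (F k) (F l))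
    {i j : ι} (hij : i ≠ j) (c : ι → K) :
    ⁅(2 : K)⁻¹ • (H i * H j) + E i * F j + F i * E j, ∑ k, c k • F k⁆ =
      (c i - c j) • (H i * F j - F i * H j) := by
  have hfar : ∀ k ∈ univ, k ∉ ({i, j} : Finset ι) →
      ⁅(2 : K)⁻¹ • (H i * H j) + E i * F j + F i * E j, c k • F k⁆ = 0 := by
    intro k _ hk
    obtain ⟨hik, hjk⟩ : i ≠ k ∧ j ≠ k := by simpa [eq_comm] using hk
    have hcomm : Commute ((2 : K)⁻¹ • (H i * H j) + E i * F j + F i * E j) (F k) :=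
      ((((cHF hik).mul_left (cHF hjk)).smul_left _).add_left
        ((cEF hik).mul_left (cFF hjk))).add_left ((cFF hik).mul_left (cEF hjk))
    exact (hcomm.smul_right (c k)).lie_eq
  rw [lie_sum, ← sum_subset (subset_univ _) hfar, sum_pair hij, lie_smul (c i) _ (F i), lie_smul (c j) _ (F j),
    lie_splitCasimir_left (hHF i) (hEF i) (cHF hij.symm) (cEF hij.symm) (cFF hij.symm),
    lie_splitCasimir_right (hHF j) (hEF j) (cHF hij) (cEF hij) (cFF hij)]
  module

theorem lie_gaudinHamiltonian_sum_smul [NeZero (2 : K)] (hHF : ∀ k, ⁅H k, F k⁆ = (-2 : K) • F k)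
    (hEF : ∀ k, ⁅E k, F k⁆ = H k) (cHF : Pairwise fun k l => Commute (H k) (F l))
    (cEF : Pairwise fun k l => Commute (E k) (F l)) (cFF : Pairwise fun k l => Commute (F k) (F l))
    (z c : ι → K) (i : ι) :
    ⁅∑ j ∈ univ.erase i, (z i - z j)⁻¹ • ((2 : K)⁻¹ • (H i * H j) + E i * F j + F i * E j),
        ∑ k, c k • F k⁆ =
      ∑ j ∈ univ.erase i, ((z i - z j)⁻¹ * (c i - c j)) • (H i * F j - F i * H j) := by
  rw [sum_lie]
  refine sum_congr rfl fun j hj => ?_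
  rw [smul_lie, lie_splitCasimir_sum_smul hHF hEF cHF cEF cFF (ne_of_mem_erase hj).symm, smul_smul]

theorem sum_smul_mul_smul_sub_smul_mul_sum_smul (cHF : Pairwise fun k l => Commute (H k) (F l))
    (c : ι → K) (i : ι) :
    (∑ k, c k • F k) * (c i • H i) - (c i • F i) * ∑ k, c k • H k =
      ∑ j ∈ univ.erase i, (c i * c j) • (H i * F j - F i * H j) := by
  rw [sum_mul, mul_sum, ← sum_sub_distrib, ← add_sum_erase _ _ (mem_univ i), sub_self, zero_add]
  refine sum_congr rfl fun j hj => ?_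
  rw [smul_mul_smul_comm, smul_mul_smul_comm, ← (cHF (ne_of_mem_erase hj).symm).eq, mul_comm (c j),
    smul_sub]

end Gaudin

theorem gaudin_bethe_commutator_general {N : ℕ} (A : Type*) [Ring A] [Algebra ℂ A]
    (z : Fin N → ℂ) (hz : Function.Injective z) (w : ℂ) (hw : ∀ k, w ≠ z k)
    (H E F : Fin N → A)
    (hHFk : ∀ k, H k * F k - F k * H k = (-2 : ℂ) • F k)
    (hEFk : ∀ k, E k * F k - F k * E k = H k)
    (hcross : ∀ k l, k ≠ l →
      Commute (H k) (H l) ∧ Commute (H k) (E l) ∧ Commute (H k) (F l) ∧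
      Commute (E k) (E l) ∧ Commute (E k) (F l) ∧ Commute (F k) (F l)) :
    ∀ i,
      (∑ j ∈ Finset.univ.erase i, (z i - z j)⁻¹ •
          ((2 : ℂ)⁻¹ • (H i * H j) + E i * F j + F i * E j)) *
        (∑ k, (w - z k)⁻¹ • F k) -
      (∑ k, (w - z k)⁻¹ • F k) *
        (∑ j ∈ Finset.univ.erase i, (z i - z j)⁻¹ •
          ((2 : ℂ)⁻¹ • (H i * H j) + E i * F j + F i * E j)) =
      (∑ k, (w - z k)⁻¹ • F k) * ((w - z i)⁻¹ • H i) -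
        ((w - z i)⁻¹ • F i) * (∑ k, (w - z k)⁻¹ • H k) := by
  intro i
  have cHF : Pairwise fun k l => Commute (H k) (F l) := fun k l hkl => (hcross k l hkl).2.2.1
  have cEF : Pairwise fun k l => Commute (E k) (F l) := fun k l hkl => (hcross k l hkl).2.2.2.2.1
  have cFF : Pairwise fun k l => Commute (F k) (F l) := fun k l hkl => (hcross k l hkl).2.2.2.2.2
  rw [← Ring.lie_def, lie_gaudinHamiltonian_sum_smul hHFk hEFk cHF cEF cFF,
    sum_smul_mul_smul_sub_smul_mul_sum_smul cHF]
  refine sum_congr rfl fun j hj => ?_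
  rw [inv_sub_mul_inv_sub_sub_inv_sub (hz.ne (ne_of_mem_erase hj).symm) (hw i) (hw j)]

/-- Commutator of a Gaudin Hamiltonian with the Bethe operator:
`[H_i, F(w)] = F(w)·H^(i)/(w-z_i) - (F^(i)/(w-z_i))·Σ_k H^(k)/(w-z_k)`,
where `F(w) = Σ_k F^(k)/(w-z_k)`. -/
theorem gaudin_bethe_commutator {N : ℕ} (A : Type*) [Ring A] [Algebra ℂ A]
    (z : Fin N → ℂ) (hz : Function.Injective z) (w : ℂ) (hw : ∀ k, w ≠ z k)
    (H E F : Fin N → A)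
    (hHEk : ∀ k, H k * E k - E k * H k = (2 : ℂ) • E k)
    (hHFk : ∀ k, H k * F k - F k * H k = (-2 : ℂ) • F k)
    (hEFk : ∀ k, E k * F k - F k * E k = H k)
    (hcross : ∀ k l, k ≠ l →
      Commute (H k) (H l) ∧ Commute (H k) (E l) ∧ Commute (H k) (F l) ∧
      Commute (E k) (E l) ∧ Commute (E k) (F l) ∧ Commute (F k) (F l)) :
    ∀ i,
      (∑ j ∈ Finset.univ.erase i, (z i - z j)⁻¹ •
          ((2 : ℂ)⁻¹ • (H i * H j) + E i * F j + F i * E j)) *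
        (∑ k, (w - z k)⁻¹ • F k) -
      (∑ k, (w - z k)⁻¹ • F k) *
        (∑ j ∈ Finset.univ.erase i, (z i - z j)⁻¹ •
          ((2 : ℂ)⁻¹ • (H i * H j) + E i * F j + F i * E j)) =
      (∑ k, (w - z k)⁻¹ • F k) * ((w - z i)⁻¹ • H i) -
        ((w - z i)⁻¹ • F i) * (∑ k, (w - z k)⁻¹ • H k) :=
  gaudin_bethe_commutator_general A z hz w hw H E F hHFk hEFk hcross
end

section
/- If the Bethe equation Σ_{k=1}^N λ_k/(w - z_k) = 0 holds, then the vector ψ_1(w) = Σ_{k=1}^N F^{(k)} v_0 / (w - z_k) satisfies H_i ψ_1(w) = s_i^1 ψ_1(w) for every i, where s_i^1 = (1/2) Σ_{j≠i} λ_i λ_j/(z_i - z_j) + λ_i/(w - z_i). -/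
/-!
On the vectors `F_k v₀` everything acts diagonally: `H_m F_k v₀ = (λ_m - 2δ_{mk}) F_k v₀` and
`E_m F_k v₀ = δ_{mk} λ_k v₀`. Hence for `i ≠ j` the two-site term `G_ij` of `H_i` acts on any
`ψ = Σ_k a_k F_k v₀` by `G_ij ψ = ½ λ_i λ_j ψ + (a_i - a_j)(λ_i F_j v₀ - λ_j F_i v₀)`.
For `a_k = 1/(w - z_k)` partial fractions give `(a_i - a_j)/(z_i - z_j) = a_i a_j`, and the
Bethe equation, in the form `Σ_{j≠i} λ_j a_j = -λ_i a_i`, collapses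
`Σ_{j≠i} a_i a_j (λ_i F_j v₀ - λ_j F_i v₀)` to `λ_i a_i ψ`.
-/

open Finset

namespace Module.End

variable {R M : Type*} [CommRing R] [AddCommGroup M] [Module R M]
  {A B C : Module.End R M} {v : M} {μ c : R}

theorem apply_apply_eq_smul_of_commute (hAB : Commute A B) (hv : A v = μ • v) :
    A (B v) = μ • B v := by
  rw [← mul_apply, hAB.eq, mul_apply, hv, map_smul]

theorem apply_apply_eq_smul_of_commutator_eq_smul (hAB : A * B - B * A = c • B)
    (hv : A v = μ • v) : A (B v) = (μ + c) • B v := by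
  have h := congr($hAB v)
  simp only [LinearMap.sub_apply, mul_apply, LinearMap.smul_apply, hv, map_smul] at h
  rw [add_smul, ← h]
  abel

theorem apply_apply_eq_of_commutator_eq (hAB : A * B - B * A = C) (hA : A v = 0)
    (hC : C v = μ • v) : A (B v) = μ • v := by
  have h := congr($hAB v)
  rwa [LinearMap.sub_apply, mul_apply, mul_apply, hA, map_zero, sub_zero, hC] at h

end Module.End

section Gaudin

variable {K Ω : Type*} [Field K] [AddCommGroup Ω] [Module K Ω] {N : ℕ}
  {H E F : Fin N → Module.End K Ω} {lam : Fin N → K} {v₀ : Ω}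

/-- `H_i = Σ_{j ≠ i} (z_i - z_j)⁻¹ • gaudinTerm H E F i j`. -/
def gaudinTerm (H E F : Fin N → Module.End K Ω) (i j : Fin N) : Module.End K Ω :=
  (2 : K)⁻¹ • (H i * H j) + E i * F j + F i * E j

theorem H_apply_F_apply (hHF : ∀ k, H k * F k - F k * H k = (-2 : K) • F k)
    (hcomm : ∀ m k, m ≠ k → Commute (H m) (F k)) (hHv : ∀ k, H k v₀ = lam k • v₀)
    (m k : Fin N) : H m (F k v₀) = (lam m - if m = k then 2 else 0) • F k v₀ := by
  split_ifs with hmk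
  · subst hmk
    rw [Module.End.apply_apply_eq_smul_of_commutator_eq_smul (hHF m) (hHv m), sub_eq_add_neg]
  · rw [sub_zero, Module.End.apply_apply_eq_smul_of_commute (hcomm m k hmk) (hHv m)]

theorem E_apply_F_apply (hEF : ∀ k, E k * F k - F k * E k = H k)
    (hcomm : ∀ m k, m ≠ k → Commute (E m) (F k)) (hHv : ∀ k, H k v₀ = lam k • v₀)
    (hEv : ∀ k, E k v₀ = 0) (m k : Fin N) :
    E m (F k v₀) = if m = k then lam m • v₀ else 0 := by
  split_ifs with hmk
  · subst hmk
    exact Module.End.apply_apply_eq_of_commutator_eq (hEF m) (hEv m) (hHv m)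
  · rw [← Module.End.mul_apply, (hcomm m k hmk).eq, Module.End.mul_apply, hEv, map_zero]

variable {i j : Fin N}

theorem gaudinTerm_apply_F_apply [NeZero (2 : K)]
    (hH : ∀ m k, H m (F k v₀) = (lam m - if m = k then 2 else 0) • F k v₀)
    (hE : ∀ m k, E m (F k v₀) = if m = k then lam m • v₀ else 0)
    (hEF : Commute (E i) (F j)) (hij : i ≠ j) (k : Fin N) :
    gaudinTerm H E F i j (F k v₀) = ((2 : K)⁻¹ * (lam i * lam j)) • F k v₀ +
      ((if k = i then lam i • F j v₀ - lam j • F i v₀ else 0) -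
        (if k = j then lam i • F j v₀ - lam j • F i v₀ else 0)) := by
  have hEFk : E i (F j (F k v₀)) = F j (E i (F k v₀)) := by
    rw [← Module.End.mul_apply, hEF.eq, Module.End.mul_apply]
  simp only [gaudinTerm, LinearMap.add_apply, LinearMap.smul_apply, Module.End.mul_apply,
    hEFk, hH, hE, map_smul]
  obtain rfl | hki := eq_or_ne k i
  · simp only [if_pos, if_neg hij, if_neg hij.symm, map_smul, map_zero, sub_zero, add_zero]
    match_scalars <;> field_simp; ring
  obtain rfl | hkj := eq_or_ne k j
  · simp only [if_pos, if_neg hij, if_neg hij.symm, map_smul, map_zero, sub_zero, add_zero,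
      zero_sub]
    match_scalars <;> field_simp; ring
  · simp only [if_neg hki, if_neg hkj, if_neg hki.symm, if_neg hkj.symm, map_zero, sub_zero,
      add_zero]
    module

theorem gaudinTerm_apply_sum_smul [NeZero (2 : K)]
    (hH : ∀ m k, H m (F k v₀) = (lam m - if m = k then 2 else 0) • F k v₀)
    (hE : ∀ m k, E m (F k v₀) = if m = k then lam m • v₀ else 0)
    (hEF : Commute (E i) (F j)) (hij : i ≠ j) (a : Fin N → K) :
    gaudinTerm H E F i j (∑ k, a k • F k v₀) =
      ((2 : K)⁻¹ * (lam i * lam j)) • ∑ k, a k • F k v₀ +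
        (a i - a j) • (lam i • F j v₀ - lam j • F i v₀) := by
  simp only [map_sum, map_smul, gaudinTerm_apply_F_apply hH hE hEF hij, smul_add, smul_sub,
    smul_ite, smul_zero, sum_add_distrib, sum_sub_distrib, sum_ite_eq', mem_univ, if_true,
    smul_comm (a _), ← smul_sum]
  module

end Gaudin

theorem sum_erase_smul_sub_eq_smul_sum {R M : Type*} [CommRing R] [AddCommGroup M] [Module R M]
    {ι : Type*} [Fintype ι] [DecidableEq ι] (a lam : ι → R) (f : ι → M)
    (h : ∑ k, lam k * a k = 0) (i : ι) :
    ∑ j ∈ univ.erase i, (a i * a j) • (lam i • f j - lam j • f i) =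
      (lam i * a i) • ∑ k, a k • f k := by
  have hsum : ∑ j ∈ univ.erase i, lam j * a j = -(lam i * a i) := by
    rw [← add_sum_erase _ _ (mem_univ i)] at h
    exact eq_neg_of_add_eq_zero_right h
  have hf : ∑ j ∈ univ.erase i, a j • f j = ∑ k, a k • f k - a i • f i := by
    rw [← add_sum_erase _ _ (mem_univ i), add_sub_cancel_left]
  calc ∑ j ∈ univ.erase i, (a i * a j) • (lam i • f j - lam j • f i)
      = (lam i * a i) • ∑ j ∈ univ.erase i, a j • f j -
          (a i * ∑ j ∈ univ.erase i, lam j * a j) • f i := by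
        simp only [smul_sub, sum_sub_distrib, smul_sum, mul_sum, sum_smul, smul_smul]
        congr 1 <;> exact sum_congr rfl fun j _ ↦ by module
    _ = (lam i * a i) • ∑ k, a k • f k := by
        rw [hf, hsum]
        module

theorem bethe_vector_one_eigenvector_general {N : ℕ} (Ω : Type*) [AddCommGroup Ω] [Module ℂ Ω]
    (z : Fin N → ℂ) (hz : Function.Injective z) (w : ℂ) (hw : ∀ k, w ≠ z k)
    (lam : Fin N → ℂ) (v₀ : Ω)
    (H E F : Fin N → Module.End ℂ Ω)
    (hHFk : ∀ k, H k * F k - F k * H k = (-2 : ℂ) • F k)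
    (hEFk : ∀ k, E k * F k - F k * E k = H k)
    (hcross : ∀ k l, k ≠ l →
      Commute (H k) (H l) ∧ Commute (H k) (E l) ∧ Commute (H k) (F l) ∧
      Commute (E k) (E l) ∧ Commute (E k) (F l) ∧ Commute (F k) (F l))
    (hHv : ∀ k, H k v₀ = lam k • v₀)
    (hEv : ∀ k, E k v₀ = 0)
    (hBethe : ∑ k, lam k / (w - z k) = 0) :
    ∀ i, (∑ j ∈ Finset.univ.erase i, (z i - z j)⁻¹ •
        ((2 : ℂ)⁻¹ • (H i * H j) + E i * F j + F i * E j))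
        (∑ k, (w - z k)⁻¹ • F k v₀) =
      ((2 : ℂ)⁻¹ * (∑ j ∈ Finset.univ.erase i, lam i * lam j / (z i - z j)) +
          lam i / (w - z i)) •
        (∑ k, (w - z k)⁻¹ • F k v₀) := by
  intro i
  have hH := H_apply_F_apply hHFk (fun m k h ↦ (hcross m k h).2.2.1) hHv
  have hE := E_apply_F_apply hEFk (fun m k h ↦ (hcross m k h).2.2.2.2.1) hHv hEv
  have hBethe' : ∑ k, lam k * (w - z k)⁻¹ = 0 := by simpa only [div_eq_mul_inv] using hBethe
  have hpartial : ∀ j ≠ i,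
      (z i - z j)⁻¹ * ((w - z i)⁻¹ - (w - z j)⁻¹) = (w - z i)⁻¹ * (w - z j)⁻¹ := fun j hj ↦ by
    rw [inv_sub_inv (sub_ne_zero.2 (hw i)) (sub_ne_zero.2 (hw j)), sub_sub_sub_cancel_left,
      ← mul_div_assoc, inv_mul_cancel₀ (sub_ne_zero.2 (hz.ne hj.symm)), one_div, mul_inv]
  calc (∑ j ∈ univ.erase i, (z i - z j)⁻¹ • gaudinTerm H E F i j) (∑ k, (w - z k)⁻¹ • F k v₀)
      = ∑ j ∈ univ.erase i,
            ((z i - z j)⁻¹ * (2⁻¹ * (lam i * lam j))) • ∑ k, (w - z k)⁻¹ • F k v₀ +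
          ∑ j ∈ univ.erase i,
            ((w - z i)⁻¹ * (w - z j)⁻¹) • (lam i • F j v₀ - lam j • F i v₀) := by
        rw [LinearMap.sum_apply, ← sum_add_distrib]
        refine sum_congr rfl fun j hj ↦ ?_
        have hij := (mem_erase.1 hj).1.symm
        rw [LinearMap.smul_apply, gaudinTerm_apply_sum_smul hH hE (hcross i j hij).2.2.2.2.1 hij,
          smul_add, smul_smul, smul_smul, hpartial j hij.symm]
    _ = _ := by
        rw [sum_erase_smul_sub_eq_smul_sum (fun k ↦ (w - z k)⁻¹) lam (fun k ↦ F k v₀) hBethe',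
          ← sum_smul, ← add_smul, mul_sum, div_eq_mul_inv]
        congr 2
        exact sum_congr rfl fun j _ ↦ by ring

/-- If the Bethe equation `Σ_k λ_k/(w-z_k) = 0` holds, then the Bethe vector
`ψ_1(w) = Σ_k F^(k) v_0/(w-z_k)` is a common eigenvector of all Gaudin
Hamiltonians, with eigenvalue
`s_i^1 = (1/2) Σ_{j≠i} λ_i λ_j/(z_i-z_j) + λ_i/(w-z_i)`. -/
theorem bethe_vector_one_eigenvector {N : ℕ} (Ω : Type*) [AddCommGroup Ω] [Module ℂ Ω]
    (z : Fin N → ℂ) (hz : Function.Injective z) (w : ℂ) (hw : ∀ k, w ≠ z k)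
    (lam : Fin N → ℂ) (v₀ : Ω)
    (H E F : Fin N → Module.End ℂ Ω)
    (hHEk : ∀ k, H k * E k - E k * H k = (2 : ℂ) • E k)
    (hHFk : ∀ k, H k * F k - F k * H k = (-2 : ℂ) • F k)
    (hEFk : ∀ k, E k * F k - F k * E k = H k)
    (hcross : ∀ k l, k ≠ l →
      Commute (H k) (H l) ∧ Commute (H k) (E l) ∧ Commute (H k) (F l) ∧
      Commute (E k) (E l) ∧ Commute (E k) (F l) ∧ Commute (F k) (F l))
    (hHv : ∀ k, H k v₀ = lam k • v₀)
    (hEv : ∀ k, E k v₀ = 0)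
    (hBethe : ∑ k, lam k / (w - z k) = 0) :
    ∀ i, (∑ j ∈ Finset.univ.erase i, (z i - z j)⁻¹ •
        ((2 : ℂ)⁻¹ • (H i * H j) + E i * F j + F i * E j))
        (∑ k, (w - z k)⁻¹ • F k v₀) =
      ((2 : ℂ)⁻¹ * (∑ j ∈ Finset.univ.erase i, lam i * lam j / (z i - z j)) +
          lam i / (w - z i)) •
        (∑ k, (w - z k)⁻¹ • F k v₀) :=
  bethe_vector_one_eigenvector_general Ω z hz w hw lam v₀ H E F hHFk hEFk hcross hHv hEv hBethe
end

section
/- If w satisfies the Bethe equation Σ_{k=1}^N λ_k/(w - z_k) = 0, then the Bethe vector ψ_1(w) = Σ_{k=1}^N F^{(k)} v_0/(w - z_k) is singular, i.e., E ψ_1(w) = 0 where E = Σ_{k=1}^N E^{(k)}. -/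
/-!
On the vacuum, `E j (F k v₀) = [E j, F k] v₀ = δ_{jk} λ_k v₀`, so the total raising operator
sends `Σ_k c_k F k v₀` to `(Σ_k c_k λ_k) v₀`. With `c_k = (w - z_k)⁻¹` the scalar is the left-hand
side of the Bethe equation.
-/

section LoweredVacuum

variable {ι R M : Type*} [DecidableEq ι] [CommRing R] [AddCommGroup M] [Module R M]
  {H E F : ι → Module.End R M} {lam : ι → R} {v₀ : M}

theorem raising_apply_lowering_vacuum
    (hEF : ∀ j k, E j * F k - F k * E j = if j = k then H k else 0)
    (hHv : ∀ k, H k v₀ = lam k • v₀) (hEv : ∀ k, E k v₀ = 0) (j k : ι) :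
    E j (F k v₀) = if j = k then lam k • v₀ else 0 := by
  have hcomm := congrArg (fun T : Module.End R M => T v₀) (hEF j k)
  simp only [LinearMap.sub_apply, Module.End.mul_apply, hEv, map_zero, sub_zero] at hcomm
  rw [hcomm]
  split_ifs
  · exact hHv k
  · rfl

theorem sum_raising_apply_sum_lowering_vacuum [Fintype ι]
    (hEF : ∀ j k, E j * F k - F k * E j = if j = k then H k else 0)
    (hHv : ∀ k, H k v₀ = lam k • v₀) (hEv : ∀ k, E k v₀ = 0) (c : ι → R) :
    (∑ j, E j) (∑ k, c k • F k v₀) = (∑ k, c k * lam k) • v₀ := by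
  simp only [LinearMap.sum_apply, map_sum, map_smul,
    raising_apply_lowering_vacuum hEF hHv hEv, Finset.sum_ite_eq',
    Finset.mem_univ, if_true, smul_smul, Finset.sum_smul]

end LoweredVacuum

theorem bethe_vector_one_singular_general {N : ℕ} (Ω : Type*) [AddCommGroup Ω] [Module ℂ Ω]
    (z : Fin N → ℂ) (w : ℂ)
    (lam : Fin N → ℂ) (v₀ : Ω)
    (H E F : Fin N → Module.End ℂ Ω)
    (hEF : ∀ j k, E j * F k - F k * E j = if j = k then H k else 0)
    (hHv : ∀ k, H k v₀ = lam k • v₀)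
    (hEv : ∀ k, E k v₀ = 0)
    (hBethe : ∑ k, lam k / (w - z k) = 0) :
    (∑ k, E k) (∑ k, (w - z k)⁻¹ • F k v₀) = 0 := by
  rw [sum_raising_apply_sum_lowering_vacuum hEF hHv hEv]
  simp_rw [inv_mul_eq_div, hBethe, zero_smul]

/-- If `w` satisfies the Bethe equation `Σ_k λ_k/(w-z_k) = 0`, then the Bethe
vector `ψ_1(w) = Σ_k F^(k) v_0/(w-z_k)` is singular: `E ψ_1(w) = 0` for the
total raising operator `E = Σ_k E^(k)`. -/
theorem bethe_vector_one_singular {N : ℕ} (Ω : Type*) [AddCommGroup Ω] [Module ℂ Ω]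
    (z : Fin N → ℂ) (hz : Function.Injective z) (w : ℂ) (hw : ∀ k, w ≠ z k)
    (lam : Fin N → ℂ) (v₀ : Ω)
    (H E F : Fin N → Module.End ℂ Ω)
    (hEF : ∀ j k, E j * F k - F k * E j = if j = k then H k else 0)
    (hHv : ∀ k, H k v₀ = lam k • v₀)
    (hEv : ∀ k, E k v₀ = 0)
    (hBethe : ∑ k, lam k / (w - z k) = 0) :
    (∑ k, E k) (∑ k, (w - z k)⁻¹ • F k v₀) = 0 :=
  bethe_vector_one_singular_general Ω z w lam v₀ H E F hEF hHv hEv hBethe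
end

section
/- If (w_1, w_2) satisfy the Bethe equations Σ_k λ_k/(w_1 - z_k) + 2/(w_2 - w_1) = 0 and Σ_k λ_k/(w_2 - z_k) + 2/(w_1 - w_2) = 0, then E ψ_2 = 0, where ψ_2 = F(w_1) F(w_2) v_0, F(w) = Σ_k F^{(k)}/(w - z_k), and E = Σ_k E^{(k)}. -/
/-!
Write `E = ∑ₖ E⁽ᵏ⁾` and `F(a) = ∑ₖ aₖ F⁽ᵏ⁾`. Since `[E, F(a)] = ∑ₖ aₖ H⁽ᵏ⁾`, moving `E` to the
right through `F(a) F(b) v₀` leaves only Cartan terms, and the result is a combination of the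
vectors `F⁽ᵏ⁾ v₀`. With `aₖ = (w₁ - zₖ)⁻¹`, `bₖ = (w₂ - zₖ)⁻¹`, the Bethe equations evaluate the
sums `∑ λₖ aₖ` and `∑ λₖ bₖ`, and the coefficient of each `F⁽ᵏ⁾ v₀` then vanishes by the
partial fraction identity `aₖ bₖ = (bₖ - aₖ) / (w₁ - w₂)`.
-/

open Finset

namespace Module.End

variable {R M : Type*} [CommRing R] [AddCommGroup M] [Module R M]

theorem apply_apply_eq_of_mul_sub_mul_eq {X Y C : Module.End R M} (h : X * Y - Y * X = C)
    (x : M) : X (Y x) = Y (X x) + C x := by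
  rw [← h, LinearMap.sub_apply, Module.End.mul_apply, Module.End.mul_apply, add_sub_cancel]

end Module.End

section HighestWeight

variable {R M ι : Type*} [CommRing R] [AddCommGroup M] [Module R M]
  {H E F : ι → Module.End R M} {lam : ι → R} {v : M}

theorem sum_mul_sub_mul_sum_eq [Fintype ι] (hEF : ∀ k, E k * F k - F k * E k = H k)
    (hEF' : ∀ j l, j ≠ l → Commute (E j) (F l)) (a : ι → R) :
    (∑ j, E j) * (∑ k, a k • F k) - (∑ k, a k • F k) * (∑ j, E j) = ∑ k, a k • H k := by
  have hsum : ∀ k, (∑ j, E j) * F k - F k * (∑ j, E j) = H k := fun k => by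
    rw [sum_mul, mul_sum, ← sum_sub_distrib,
      sum_eq_single k (fun j _ hj => sub_eq_zero.mpr (hEF' j k hj).eq) (by simp), hEF]
  rw [mul_sum, sum_mul, ← sum_sub_distrib]
  simp only [mul_smul_comm, smul_mul_assoc, ← smul_sub, hsum]

theorem H_apply_F_vacuum [DecidableEq ι] (hHF : ∀ k, H k * F k - F k * H k = (-2 : R) • F k)
    (hHF' : ∀ j l, j ≠ l → Commute (H j) (F l)) (hHv : ∀ k, H k v = lam k • v) (k l : ι) :
    H k (F l v) = (lam k - if k = l then 2 else 0) • F l v := by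
  split_ifs with h
  · subst h
    rw [Module.End.apply_apply_eq_of_mul_sub_mul_eq (hHF k), hHv, map_smul,
      LinearMap.smul_apply]
    module
  · rw [← Module.End.mul_apply, (hHF' k l h).eq, Module.End.mul_apply, hHv, map_smul, sub_zero]

theorem sum_E_apply_F_vacuum [Fintype ι] (hEF : ∀ k, E k * F k - F k * E k = H k)
    (hEF' : ∀ j l, j ≠ l → Commute (E j) (F l)) (hHv : ∀ k, H k v = lam k • v)
    (hEv : ∀ k, E k v = 0) (b : ι → R) :
    (∑ j, E j) ((∑ l, b l • F l) v) = (∑ l, lam l * b l) • v := by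
  rw [Module.End.apply_apply_eq_of_mul_sub_mul_eq (sum_mul_sub_mul_sum_eq hEF hEF' b)]
  simp [hEv, hHv, sum_smul, smul_smul, mul_comm]

theorem sum_E_apply_F_F_vacuum [Fintype ι] [DecidableEq ι]
    (hEF : ∀ k, E k * F k - F k * E k = H k) (hEF' : ∀ j l, j ≠ l → Commute (E j) (F l))
    (hHF : ∀ k, H k * F k - F k * H k = (-2 : R) • F k)
    (hHF' : ∀ j l, j ≠ l → Commute (H j) (F l)) (hHv : ∀ k, H k v = lam k • v)
    (hEv : ∀ k, E k v = 0) (a b : ι → R) :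
    (∑ j, E j) ((∑ k, a k • F k) ((∑ l, b l • F l) v)) =
      ∑ k, ((∑ l, lam l * b l) * a k + (∑ l, lam l * a l) * b k - 2 * (a k * b k)) • F k v := by
  rw [Module.End.apply_apply_eq_of_mul_sub_mul_eq (sum_mul_sub_mul_sum_eq hEF hEF' a),
    sum_E_apply_F_vacuum hEF hEF' hHv hEv]
  simp only [LinearMap.sum_apply, LinearMap.smul_apply, map_sum, map_smul,
    H_apply_F_vacuum hHF hHF' hHv, smul_sum, smul_smul, ← sum_smul, ← sum_add_distrib,
    ← add_smul]
  refine sum_congr rfl fun k _ => congrArg (· • F k v) ?_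
  simp only [mul_sub, sum_sub_distrib, mul_ite, mul_zero, sum_ite_eq', mem_univ, if_true,
    mul_comm (a _) (lam _)]
  ring

end HighestWeight

theorem bethe_coefficient_eq_zero {K : Type*} [Field K] {w₁ w₂ z : K} (hw : w₁ ≠ w₂)
    (hz₁ : w₁ ≠ z) (hz₂ : w₂ ≠ z) :
    -(2 / (w₁ - w₂)) * (w₁ - z)⁻¹ + -(2 / (w₂ - w₁)) * (w₂ - z)⁻¹
      - 2 * ((w₁ - z)⁻¹ * (w₂ - z)⁻¹) = 0 := by
  have : w₁ - w₂ ≠ 0 := sub_ne_zero.mpr hw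
  have : w₂ - w₁ ≠ 0 := sub_ne_zero.mpr hw.symm
  have : w₁ - z ≠ 0 := sub_ne_zero.mpr hz₁
  have : w₂ - z ≠ 0 := sub_ne_zero.mpr hz₂
  field_simp
  ring

theorem bethe_vector_two_singular_general {N : ℕ} (Ω : Type*) [AddCommGroup Ω] [Module ℂ Ω]
    (z : Fin N → ℂ)
    (w₁ w₂ : ℂ) (hw₁ : ∀ k, w₁ ≠ z k) (hw₂ : ∀ k, w₂ ≠ z k) (hww : w₁ ≠ w₂)
    (lam : Fin N → ℂ) (v₀ : Ω)
    (H E F : Fin N → Module.End ℂ Ω)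
    (hHFk : ∀ k, H k * F k - F k * H k = (-2 : ℂ) • F k)
    (hEFk : ∀ k, E k * F k - F k * E k = H k)
    (hcross : ∀ k l, k ≠ l →
      Commute (H k) (H l) ∧ Commute (H k) (E l) ∧ Commute (H k) (F l) ∧
      Commute (E k) (E l) ∧ Commute (E k) (F l) ∧ Commute (F k) (F l))
    (hHv : ∀ k, H k v₀ = lam k • v₀)
    (hEv : ∀ k, E k v₀ = 0)
    (hBethe₁ : (∑ k, lam k / (w₁ - z k)) + 2 / (w₂ - w₁) = 0)
    (hBethe₂ : (∑ k, lam k / (w₂ - z k)) + 2 / (w₁ - w₂) = 0) :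
    (∑ k, E k)
      ((∑ k, (w₁ - z k)⁻¹ • F k) ((∑ k, (w₂ - z k)⁻¹ • F k) v₀)) = 0 := by
  have hΛ₁ : ∑ k, lam k * (w₁ - z k)⁻¹ = -(2 / (w₂ - w₁)) := by
    simpa only [div_eq_mul_inv] using eq_neg_of_add_eq_zero_left hBethe₁
  have hΛ₂ : ∑ k, lam k * (w₂ - z k)⁻¹ = -(2 / (w₁ - w₂)) := by
    simpa only [div_eq_mul_inv] using eq_neg_of_add_eq_zero_left hBethe₂
  rw [sum_E_apply_F_F_vacuum hEFk (fun k l h => (hcross k l h).2.2.2.2.1) hHFk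
    (fun k l h => (hcross k l h).2.2.1) hHv hEv, hΛ₁, hΛ₂]
  exact sum_eq_zero fun k _ => by
    rw [bethe_coefficient_eq_zero hww (hw₁ k) (hw₂ k), zero_smul]

/-- If `(w_1, w_2)` satisfy the Bethe equations
`Σ_k λ_k/(w_1-z_k) + 2/(w_2-w_1) = 0` and `Σ_k λ_k/(w_2-z_k) + 2/(w_1-w_2) = 0`,
then `E ψ_2 = 0`, where `ψ_2 = F(w_1) F(w_2) v_0`, `F(w) = Σ_k F^(k)/(w-z_k)`,
and `E = Σ_k E^(k)`. -/
theorem bethe_vector_two_singular {N : ℕ} (Ω : Type*) [AddCommGroup Ω] [Module ℂ Ω]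
    (z : Fin N → ℂ) (hz : Function.Injective z)
    (w₁ w₂ : ℂ) (hw₁ : ∀ k, w₁ ≠ z k) (hw₂ : ∀ k, w₂ ≠ z k) (hww : w₁ ≠ w₂)
    (lam : Fin N → ℂ) (v₀ : Ω)
    (H E F : Fin N → Module.End ℂ Ω)
    (hHEk : ∀ k, H k * E k - E k * H k = (2 : ℂ) • E k)
    (hHFk : ∀ k, H k * F k - F k * H k = (-2 : ℂ) • F k)
    (hEFk : ∀ k, E k * F k - F k * E k = H k)
    (hcross : ∀ k l, k ≠ l →
      Commute (H k) (H l) ∧ Commute (H k) (E l) ∧ Commute (H k) (F l) ∧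
      Commute (E k) (E l) ∧ Commute (E k) (F l) ∧ Commute (F k) (F l))
    (hHv : ∀ k, H k v₀ = lam k • v₀)
    (hEv : ∀ k, E k v₀ = 0)
    (hBethe₁ : (∑ k, lam k / (w₁ - z k)) + 2 / (w₂ - w₁) = 0)
    (hBethe₂ : (∑ k, lam k / (w₂ - z k)) + 2 / (w₁ - w₂) = 0) :
    (∑ k, E k)
      ((∑ k, (w₁ - z k)⁻¹ • F k) ((∑ k, (w₂ - z k)⁻¹ • F k) v₀)) = 0 :=
  bethe_vector_two_singular_general Ω z w₁ w₂ hw₁ hw₂ hww lam v₀ H E F hHFk hEFk hcross hHv hEv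
    hBethe₁ hBethe₂
end
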